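/- arXiv:2301.11502 — 4 statements merged into one kernel-verified Lean document; each statement's English description precedes it below -/
import Mathlib

section
/- Let n ≥ 1, let v : Fin n → ℝ be nonnegative, and let Γ be a real number with 0 ≤ Γ ≤ n and ⌊Γ⌋ < n. Then the supremum of ∑_{j} v_j · η_j over all η : Fin n → ℝ with 0 ≤ η_j ≤ 1 for all j and ∑_j η_j ≤ Γ equals the maximum, over pairs (S, t) with S ⊆ Fin n, |S| = ⌊Γ⌋, and t ∉ S, of ∑_{j∈S} v_j + (Γ − ⌊Γ⌋) · v_t. In particular the supremum is attained. -/
open Finset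

private lemma bs_card_filter (n k : ℕ) (hk : k ≤ n) :
    (Finset.univ.filter (fun i : Fin n => n - k ≤ i.val)).card = k := by
  have : (Finset.univ.filter (fun i : Fin n => n - k ≤ i.val)).card
      = ((Finset.range n).filter (fun i => n - k ≤ i)).card := by
    apply Finset.card_nbij (fun i => i.val)
    · intro a ha; simp at ha ⊢; omega
    · intro a ha b hb hab; exact Fin.ext hab
    · intro b hb; simp at hb ⊢; exact ⟨⟨b, hb.1⟩, hb.2, rfl⟩
  rw [this, Finset.range_eq_Ico, Finset.Ico_filter_le, Nat.card_Ico]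
  omega

/-- the indicator-type η built from (S, t) is feasible and has LP value ∑_S v + f v_t. -/
private lemma bs_comb_subset_lp (n : ℕ) (v : Fin n → ℝ) (Γ : ℝ) (hΓ0 : 0 ≤ Γ)
    (S : Finset (Fin n)) (t : Fin n) (hcard : S.card = ⌊Γ⌋₊) (ht : t ∉ S) :
    ∃ η : Fin n → ℝ,
      (∀ j, 0 ≤ η j ∧ η j ≤ 1) ∧ (∑ j, η j) ≤ Γ ∧
      (∑ j ∈ S, v j + (Γ - (⌊Γ⌋₊ : ℝ)) * v t) = ∑ j, v j * η j := by
  set f : ℝ := Γ - (⌊Γ⌋₊ : ℝ) with hf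
  have hf0 : 0 ≤ f := by
    have := Nat.floor_le hΓ0
    simp [hf]; linarith
  have hf1 : f < 1 := by
    have := Nat.lt_floor_add_one Γ
    simp [hf]; linarith
  refine ⟨fun j => (if j ∈ S then 1 else 0) + (if j = t then f else 0), ?_, ?_, ?_⟩
  · intro j
    by_cases hjS : j ∈ S <;> by_cases hjt : j = t <;> simp_all
    all_goals first | linarith | (constructor <;> linarith)
  · have h1 : (∑ j, ((if j ∈ S then (1:ℝ) else 0) + (if j = t then f else 0)))
        = (S.card : ℝ) + f := by
      rw [Finset.sum_add_distrib]
      simp [Finset.sum_ite_eq', Finset.sum_ite_mem]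
    rw [h1, hcard]
    simp [hf]
  · have h1 : ∀ j, v j * ((if j ∈ S then (1:ℝ) else 0) + (if j = t then f else 0))
        = (if j ∈ S then v j else 0) + (if j = t then f * v j else 0) := by
      intro j; by_cases hjS : j ∈ S <;> by_cases hjt : j = t <;> simp_all <;> ring
    simp only [h1]
    rw [Finset.sum_add_distrib]
    simp [Finset.sum_ite_eq', Finset.sum_ite_mem]

/-- Bertsimas–Sim protection function: for nonnegative `v` and
`0 ≤ Γ ≤ n` with `⌊Γ⌋ < n`, the supremum of `∑ j, v j * η j` over
`η` with `0 ≤ η j ≤ 1` and `∑ j, η j ≤ Γ` equals the maximum over pairs `(S, t)` with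
`|S| = ⌊Γ⌋` and `t ∉ S` of `∑_{j ∈ S} v j + (Γ − ⌊Γ⌋) * v t`; both are attained. -/
theorem bertsimas_sim_protection_function (n : ℕ) (hn : 1 ≤ n)
    (v : Fin n → ℝ) (hv : ∀ j, 0 ≤ v j)
    (Γ : ℝ) (hΓ0 : 0 ≤ Γ) (hΓn : Γ ≤ (n : ℝ)) (hfloor : ⌊Γ⌋₊ < n) :
    ∃ M : ℝ,
      IsGreatest
        {s : ℝ | ∃ η : Fin n → ℝ,
          (∀ j, 0 ≤ η j ∧ η j ≤ 1) ∧ (∑ j, η j) ≤ Γ ∧ s = ∑ j, v j * η j} M ∧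
      IsGreatest
        {s : ℝ | ∃ (S : Finset (Fin n)) (t : Fin n),
          S.card = ⌊Γ⌋₊ ∧ t ∉ S ∧
          s = ∑ j ∈ S, v j + (Γ - (⌊Γ⌋₊ : ℝ)) * v t} M := by
  classical
  set k : ℕ := ⌊Γ⌋₊ with hk
  set f : ℝ := Γ - (k : ℝ) with hf
  have hf0 : 0 ≤ f := by
    have := Nat.floor_le hΓ0
    simp [hf, hk]; linarith
  have hΓeq : Γ = (k : ℝ) + f := by ring
  set σ : Equiv.Perm (Fin n) := Tuple.sort v with hσ
  have hmono : Monotone (v ∘ σ) := Tuple.monotone_sort v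
  set t : Fin n := σ ⟨n - 1 - k, by omega⟩ with ht
  set S : Finset (Fin n) :=
    (Finset.univ.filter (fun i : Fin n => n - k ≤ i.val)).image σ with hS
  have hmemS : ∀ j, j ∈ S ↔ n - k ≤ (σ.symm j).val := by
    intro j
    simp only [hS, Finset.mem_image, Finset.mem_filter, Finset.mem_univ, true_and]
    constructor
    · rintro ⟨i, hi, rfl⟩; simpa using hi
    · intro h; exact ⟨σ.symm j, h, by simp⟩
  have hcardS : S.card = k := by
    rw [hS, Finset.card_image_of_injective _ σ.injective]
    exact bs_card_filter n k (le_of_lt hfloor)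
  have htS : t ∉ S := by
    rw [hmemS, ht]
    simp only [Equiv.symm_apply_apply]
    omega
  -- S dominates: v t ≤ v j for j ∈ S, v j ≤ v t for j ∉ S
  have hSt : ∀ j ∈ S, v t ≤ v j := by
    intro j hj
    rw [hmemS] at hj
    have : v (σ ⟨n - 1 - k, by omega⟩) ≤ v (σ (σ.symm j)) := by
      apply hmono
      show (⟨n - 1 - k, by omega⟩ : Fin n) ≤ σ.symm j
      rw [Fin.le_def]; simpa using by omega
    simpa [ht] using this
  have hnotS : ∀ j, j ∉ S → v j ≤ v t := by
    intro j hj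
    rw [hmemS] at hj
    push_neg at hj
    have : v (σ (σ.symm j)) ≤ v (σ ⟨n - 1 - k, by omega⟩) := by
      apply hmono
      show σ.symm j ≤ (⟨n - 1 - k, by omega⟩ : Fin n)
      rw [Fin.le_def]; simpa using by omega
    simpa [ht] using this
  set M : ℝ := ∑ j ∈ S, v j + f * v t with hM
  -- upper bound on LP set
  have hub : ∀ s ∈ {s : ℝ | ∃ η : Fin n → ℝ,
      (∀ j, 0 ≤ η j ∧ η j ≤ 1) ∧ (∑ j, η j) ≤ Γ ∧ s = ∑ j, v j * η j}, s ≤ M := by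
    rintro s ⟨η, hη, hsum, rfl⟩
    set c : ℝ := v t with hc
    have hc0 : 0 ≤ c := hv t
    have key : ∑ j, v j * η j = ∑ j, (v j - c) * η j + c * ∑ j, η j := by
      rw [Finset.mul_sum, ← Finset.sum_add_distrib]
      apply Finset.sum_congr rfl; intro j _; ring
    rw [key]
    have h1 : ∑ j, (v j - c) * η j ≤ ∑ j ∈ S, (v j - c) := by
      rw [← Finset.sum_filter_add_sum_filter_not Finset.univ (· ∈ S)]
      have hfilter : Finset.univ.filter (· ∈ S) = S := by
        ext j; simp
      rw [hfilter]
      have h2 : ∑ j ∈ Finset.univ.filter (· ∉ S), (v j - c) * η j ≤ 0 := by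
        apply Finset.sum_nonpos
        intro j hj
        simp only [Finset.mem_filter] at hj
        have := hnotS j hj.2
        have := (hη j).1
        nlinarith
      have h3 : ∑ j ∈ S, (v j - c) * η j ≤ ∑ j ∈ S, (v j - c) := by
        apply Finset.sum_le_sum
        intro j hj
        have h4 := hSt j hj
        have h5 := (hη j).2
        nlinarith
      linarith
    have h6 : c * ∑ j, η j ≤ c * Γ := by
      exact mul_le_mul_of_nonneg_left hsum hc0
    have h7 : ∑ j ∈ S, (v j - c) = ∑ j ∈ S, v j - k * c := by
      rw [Finset.sum_sub_distrib, Finset.sum_const, hcardS]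
      simp [nsmul_eq_mul]
    have : ∑ j ∈ S, (v j - c) + c * Γ = M := by
      rw [h7, hM, hΓeq, hc]; ring
    linarith
  refine ⟨M, ⟨?_, hub⟩, ⟨?_, ?_⟩⟩
  · -- M in LP set
    obtain ⟨η, hη, hsum, heq⟩ := bs_comb_subset_lp n v Γ hΓ0 S t hcardS htS
    refine ⟨η, hη, hsum, ?_⟩
    rw [← heq]
  · -- M in combinatorial set
    exact ⟨S, t, hcardS, htS, by rw [hM]⟩
  · -- upper bound on combinatorial set: subset of LP set
    rintro s ⟨S', t', hcard', ht', rfl⟩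
    obtain ⟨η, hη, hsum, heq⟩ := bs_comb_subset_lp n v Γ hΓ0 S' t' hcard' ht'
    exact hub _ ⟨η, hη, hsum, heq⟩
end

section
/- Let n ≥ 1, let v : Fin n → ℝ be nonnegative, and let Γ be a real number with 0 ≤ Γ ≤ n. Then strong linear programming duality holds for the protection-function pair: the supremum of ∑_j v_j · η_j over η : Fin n → ℝ with 0 ≤ η_j ≤ 1 and ∑_j η_j ≤ Γ equals the infimum of β · Γ + ∑_j μ_j over all β ≥ 0 and μ : Fin n → ℝ≥0 satisfying β + μ_j ≥ v_j for every j, and both the supremum and the infimum are attained. -/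
lemma clamp_sum (n : ℕ) (Γ : ℝ) (h0 : 0 ≤ Γ) (hn : Γ ≤ n) :
    ∑ c ∈ Finset.range n, min 1 (max 0 (Γ - c)) = Γ := by
  induction n with
  | zero => simp at hn ⊢; linarith
  | succ m ih =>
    rw [Finset.sum_range_succ]
    by_cases h : Γ ≤ m
    · rw [ih h]
      have : max 0 (Γ - (m:ℝ)) = 0 := max_eq_left (by linarith)
      rw [this]; simp
    · push_neg at h
      have hlast : min 1 (max 0 (Γ - (m:ℝ))) = Γ - m := by
        rw [max_eq_right (by linarith)]
        apply min_eq_right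
        push_cast at hn
        linarith
      have hall : ∀ c ∈ Finset.range m, min 1 (max 0 (Γ - (c:ℝ))) = 1 := by
        intro c hc
        have : (c:ℝ) + 1 ≤ m := by exact_mod_cast Finset.mem_range.mp hc
        rw [max_eq_right (by linarith), min_eq_left (by linarith)]
      rw [Finset.sum_congr rfl hall, hlast]
      simp

lemma weak_dual (n : ℕ) (v : Fin n → ℝ) (Γ : ℝ) (η : Fin n → ℝ)
    (hη : ∀ j, 0 ≤ η j ∧ η j ≤ 1) (hsum : ∑ j, η j ≤ Γ)
    (β : ℝ) (μ : Fin n → ℝ) (hβ : 0 ≤ β) (hμ : ∀ j, 0 ≤ μ j)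
    (hfeas : ∀ j, v j ≤ β + μ j) :
    ∑ j, v j * η j ≤ β * Γ + ∑ j, μ j := by
  calc ∑ j, v j * η j ≤ ∑ j, (β + μ j) * η j := by
        apply Finset.sum_le_sum
        intro j _
        exact mul_le_mul_of_nonneg_right (hfeas j) (hη j).1
    _ = β * (∑ j, η j) + ∑ j, μ j * η j := by
        rw [Finset.mul_sum, ← Finset.sum_add_distrib]
        congr 1; ext j; ring
    _ ≤ β * Γ + ∑ j, μ j := by
        have h1 : β * (∑ j, η j) ≤ β * Γ := mul_le_mul_of_nonneg_left hsum hβ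
        have h2 : ∑ j, μ j * η j ≤ ∑ j, μ j := by
          apply Finset.sum_le_sum
          intro j _
          nlinarith [(hη j).1, (hη j).2, hμ j]
        linarith


/-- strong LP duality for the Bertsimas–Sim protection-function pair:
for nonnegative `v` and `0 ≤ Γ ≤ n`, the supremum of `∑ j, v j * η j` over
`0 ≤ η j ≤ 1`, `∑ j, η j ≤ Γ` equals the infimum of `β * Γ + ∑ j, μ j` over
`β ≥ 0`, `μ ≥ 0` with `β + μ j ≥ v j` for every `j`; both are attained. -/
theorem bertsimas_sim_strong_duality (n : ℕ) (hn : 1 ≤ n)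
    (v : Fin n → ℝ) (hv : ∀ j, 0 ≤ v j)
    (Γ : ℝ) (hΓ0 : 0 ≤ Γ) (hΓn : Γ ≤ (n : ℝ)) :
    ∃ M : ℝ,
      IsGreatest
        {s : ℝ | ∃ η : Fin n → ℝ,
          (∀ j, 0 ≤ η j ∧ η j ≤ 1) ∧ (∑ j, η j) ≤ Γ ∧ s = ∑ j, v j * η j} M ∧
      IsLeast
        {s : ℝ | ∃ (β : ℝ) (μ : Fin n → ℝ),
          0 ≤ β ∧ (∀ j, 0 ≤ μ j) ∧ (∀ j, v j ≤ β + μ j) ∧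
          s = β * Γ + ∑ j, μ j} M := by
  classical
  set σ : Equiv.Perm (Fin n) := Tuple.sort (fun i => -v i) with hσ
  set w : Fin n → ℝ := fun i => v (σ i) with hwdef
  have hw : Antitone w := by
    intro a b hab
    have := Tuple.monotone_sort (fun i => -v i) hab
    simpa [hwdef] using this
  set k : ℕ := Nat.floor Γ with hkdef
  have hk1 : (k : ℝ) ≤ Γ := Nat.floor_le hΓ0
  have hk2 : Γ < k + 1 := Nat.lt_floor_add_one Γ
  have hk3 : k ≤ n := by
    have : (k : ℝ) ≤ n := le_trans hk1 hΓn
    exact_mod_cast this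
  set β : ℝ := if h : k < n then w ⟨k, h⟩ else 0 with hβdef
  have hβ0 : 0 ≤ β := by
    rw [hβdef]; split
    · exact hv _
    · exact le_refl 0
  set η' : Fin n → ℝ := fun i => min 1 (max 0 (Γ - (i : ℕ))) with hη'def
  have hη'01 : ∀ i, 0 ≤ η' i ∧ η' i ≤ 1 := by
    intro i
    exact ⟨le_min zero_le_one (le_max_left _ _), min_le_left _ _⟩
  -- pointwise identity
  have hpt : ∀ i, w i * η' i = β * η' i + max (w i - β) 0 := by
    intro i
    rcases lt_trichotomy (i : ℕ) k with hik | hik | hik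
    · have h1 : (1:ℝ) ≤ Γ - (i:ℕ) := by
        have : ((i:ℕ) : ℝ) + 1 ≤ k := by exact_mod_cast hik
        linarith
      have hη1 : η' i = 1 := by
        rw [hη'def]; simp only
        rw [max_eq_right (by linarith), min_eq_left h1]
      have hwβ : β ≤ w i := by
        rw [hβdef]
        split
        · rename_i h
          exact hw (show i ≤ ⟨k, h⟩ from le_of_lt hik)
        · exact hv _
      rw [hη1, max_eq_left (by linarith)]
      ring
    · have hkn : k < n := hik ▸ i.isLt
      have hβw : β = w i := by
        rw [hβdef, dif_pos hkn]
        congr 1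
        exact Fin.ext hik.symm
      rw [hβw]
      simp
    · have h0 : Γ - (i:ℕ) < 0 := by
        have : ((k:ℕ) : ℝ) + 1 ≤ (i:ℕ) := by exact_mod_cast hik
        linarith
      have hη0 : η' i = 0 := by
        rw [hη'def]; simp only
        rw [max_eq_left (le_of_lt h0)]
        simp
      have hkn : k < n := lt_trans hik i.isLt
      have hwβ : w i ≤ β := by
        rw [hβdef, dif_pos hkn]
        exact hw (show (⟨k, hkn⟩ : Fin n) ≤ i from le_of_lt hik)
      rw [hη0, max_eq_right (by linarith)]
      ring
  -- sum of η' equals Γ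
  have hη'sum : ∑ i, η' i = Γ := by
    rw [hη'def]
    rw [Fin.sum_univ_eq_sum_range (fun c => min 1 (max 0 (Γ - (c:ℕ))))]
    exact clamp_sum n Γ hΓ0 hΓn
  -- the primal solution
  set η : Fin n → ℝ := fun j => η' (σ.symm j) with hηdef
  have hησ : ∀ i, η (σ i) = η' i := by
    intro i
    simp [hηdef]
  have hη01 : ∀ j, 0 ≤ η j ∧ η j ≤ 1 := fun j => hη'01 _
  have hηsum : ∑ j, η j = Γ := by
    rw [← hη'sum]
    exact Equiv.sum_comp σ.symm η'
  -- the dual solution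
  set μ : Fin n → ℝ := fun j => max (v j - β) 0 with hμdef
  have hμ0 : ∀ j, 0 ≤ μ j := fun j => le_max_right _ _
  have hμfeas : ∀ j, v j ≤ β + μ j := by
    intro j
    have : v j - β ≤ μ j := le_max_left _ _
    linarith
  set M : ℝ := β * Γ + ∑ j, μ j with hMdef
  -- primal value equals M
  have hμsum : ∑ j, μ j = ∑ i, max (w i - β) 0 := by
    rw [hμdef]
    exact (Equiv.sum_comp σ (fun j => max (v j - β) 0)).symm
  have hprimal : ∑ j, v j * η j = M := by
    have h1 : ∑ j, v j * η j = ∑ i, w i * η' i := by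
      rw [← Equiv.sum_comp σ (fun j => v j * η j)]
      apply Finset.sum_congr rfl
      intro i _
      rw [hησ i]
    rw [h1, hMdef, hμsum]
    rw [Finset.sum_congr rfl (fun i _ => hpt i), Finset.sum_add_distrib,
      ← Finset.mul_sum, hη'sum]
  refine ⟨M, ⟨⟨η, hη01, le_of_eq hηsum, hprimal.symm⟩, ?_⟩,
    ⟨⟨β, μ, hβ0, hμ0, hμfeas, hMdef⟩, ?_⟩⟩
  · rintro s ⟨η₂, h1, h2, rfl⟩
    calc ∑ j, v j * η₂ j ≤ β * Γ + ∑ j, μ j :=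
          weak_dual n v Γ η₂ h1 h2 β μ hβ0 hμ0 hμfeas
      _ = M := hMdef.symm
  · rintro s ⟨β₂, μ₂, hb, hm, hf, rfl⟩
    calc M = ∑ j, v j * η j := hprimal.symm
      _ ≤ β₂ * Γ + ∑ j, μ₂ j :=
          weak_dual n v Γ η hη01 (le_of_eq hηsum) β₂ μ₂ hb hm hf
end

section
/- Let n ≥ 1, let x : Fin n → ℝ be nonnegative, let a, â : Fin n → ℝ with â nonnegative, let Γ be a natural number with Γ ≤ n, and let b ∈ ℝ. Suppose x satisfies the robust constraint ∑_j a_j x_j + max_{S ⊆ Fin n, |S| ≤ Γ} ∑_{j∈S} â_j x_j ≤ b. Then for every realization ã : Fin n → ℝ with ã_j ∈ [a_j − â_j, a_j + â_j] for all j and such that |{j : ã_j ≠ a_j}| ≤ Γ, one has ∑_j ã_j x_j ≤ b. -/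
/-- robust feasibility under at most `Γ` deviations: if `x ≥ 0` satisfies the
robust constraint `∑ j, a j * x j + max_{|S| ≤ Γ} ∑_{j ∈ S} â j * x j ≤ b`, then for every
realization `ã` with `ã j ∈ [a j − â j, a j + â j]` for all `j`, and at most `Γ` coefficients
deviating from their nominal values, we have `∑ j, ã j * x j ≤ b`. -/
theorem bertsimas_sim_robust_feasibility (n : ℕ) (hn : 1 ≤ n)
    (x : Fin n → ℝ) (hx : ∀ j, 0 ≤ x j)
    (a ahat : Fin n → ℝ) (hahat : ∀ j, 0 ≤ ahat j)
    (Γ : ℕ) (hΓ : Γ ≤ n) (b : ℝ)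
    (hrobust : ∑ j, a j * x j +
      sSup {s : ℝ | ∃ S : Finset (Fin n), S.card ≤ Γ ∧ s = ∑ j ∈ S, ahat j * x j} ≤ b) :
    ∀ atil : Fin n → ℝ,
      (∀ j, a j - ahat j ≤ atil j ∧ atil j ≤ a j + ahat j) →
      {j : Fin n | atil j ≠ a j}.ncard ≤ Γ →
      ∑ j, atil j * x j ≤ b := by
  intro atil hbound hcard
  set T : Set ℝ := {s : ℝ | ∃ S : Finset (Fin n), S.card ≤ Γ ∧ s = ∑ j ∈ S, ahat j * x j}
    with hT
  -- the deviation set as a Finset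
  classical
  set S : Finset (Fin n) := Finset.univ.filter (fun j => atil j ≠ a j) with hS
  have hScard : S.card ≤ Γ := by
    have : (S : Set (Fin n)) = {j : Fin n | atil j ≠ a j} := by
      ext j; simp [hS]
    calc S.card = (S : Set (Fin n)).ncard := (Set.ncard_coe_finset S).symm
      _ = {j : Fin n | atil j ≠ a j}.ncard := by rw [this]
      _ ≤ Γ := hcard
  have hmem : (∑ j ∈ S, ahat j * x j) ∈ T := ⟨S, hScard, rfl⟩
  have hbdd : BddAbove T := by
    have hfin : T.Finite := by
      have : T ⊆ (fun S : Finset (Fin n) => ∑ j ∈ S, ahat j * x j) '' Set.univ := by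
        rintro s ⟨S, _, rfl⟩; exact ⟨S, trivial, rfl⟩
      exact Set.Finite.subset ((Set.finite_univ).image _) this
    exact hfin.bddAbove
  have hle : (∑ j ∈ S, ahat j * x j) ≤ sSup T := le_csSup hbdd hmem
  have key : ∑ j, atil j * x j ≤ ∑ j, a j * x j + ∑ j ∈ S, ahat j * x j := by
    have : ∑ j, atil j * x j - ∑ j, a j * x j = ∑ j, (atil j - a j) * x j := by
      rw [← Finset.sum_sub_distrib]; congr 1; ext j; ring
    have h2 : ∑ j, (atil j - a j) * x j ≤ ∑ j ∈ S, ahat j * x j := by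
      have heq : ∑ j, (atil j - a j) * x j = ∑ j ∈ S, (atil j - a j) * x j := by
        rw [← Finset.sum_filter_add_sum_filter_not Finset.univ (fun j => atil j ≠ a j)]
        have : ∑ j ∈ Finset.univ.filter (fun j => ¬ atil j ≠ a j), (atil j - a j) * x j = 0 := by
          apply Finset.sum_eq_zero
          intro j hj
          simp only [Finset.mem_filter, not_not] at hj
          rw [hj.2]; ring
        rw [this, add_zero]
      rw [heq]
      apply Finset.sum_le_sum
      intro j _
      apply mul_le_mul_of_nonneg_right _ (hx j)
      have := hbound j
      linarith [this.1, this.2]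
    linarith
  calc ∑ j, atil j * x j ≤ ∑ j, a j * x j + ∑ j ∈ S, ahat j * x j := key
    _ ≤ ∑ j, a j * x j + sSup T := by linarith
    _ ≤ b := hrobust
end

section
/- Let n ≥ 1, let c : Fin n → ℝ, and let Γ be a natural number with Γ ≤ n. Then the supremum of ∑_j c_j ξ_j over all ξ : Fin n → ℝ with |ξ_j| ≤ 1 for all j and ∑_j |ξ_j| ≤ Γ equals the maximum over subsets S ⊆ Fin n with |S| = Γ of ∑_{j∈S} |c_j|, i.e., the sum of the Γ largest values among |c_1|, ..., |c_n|; in particular the supremum is attained. -/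
private lemma sign_helper (x : ℝ) : x * Real.sign x = |x| := by
  rcases lt_trichotomy x 0 with h | h | h
  · rw [Real.sign_of_neg h, abs_of_neg h]; ring
  · simp [h]
  · rw [Real.sign_of_pos h, abs_of_pos h]; ring

private lemma abs_sign_le_one (x : ℝ) : |Real.sign x| ≤ 1 := by
  rcases lt_trichotomy x 0 with h | h | h
  · rw [Real.sign_of_neg h]; norm_num
  · simp [h]
  · rw [Real.sign_of_pos h]; norm_num

private lemma key_ineq (n Γ : ℕ) (a t : Fin n → ℝ)
    (ha : ∀ j, 0 ≤ a j) (ht0 : ∀ j, 0 ≤ t j) (ht1 : ∀ j, t j ≤ 1)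
    (hsum : ∑ j, t j ≤ (Γ : ℝ)) (S : Finset (Fin n)) (hcard : S.card = Γ)
    (hmax : ∀ T : Finset (Fin n), T.card = Γ → ∑ j ∈ T, a j ≤ ∑ j ∈ S, a j) :
    ∑ j, a j * t j ≤ ∑ j ∈ S, a j := by
  rcases Nat.eq_zero_or_pos Γ with hΓ0 | hΓpos
  · subst hΓ0
    have hall : ∀ j, t j = 0 := by
      intro j
      have h1 : t j ≤ ∑ i, t i := Finset.single_le_sum (fun i _ => ht0 i) (Finset.mem_univ j)
      have : (0:ℝ) = ((0:ℕ):ℝ) := by norm_num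
      linarith [hsum, ht0 j]
    have : ∑ j, a j * t j = 0 := Finset.sum_eq_zero (fun j _ => by rw [hall j]; ring)
    rw [this]
    exact Finset.sum_nonneg (fun j _ => ha j)
  · have hSne : S.Nonempty := Finset.card_pos.mp (hcard ▸ hΓpos)
    obtain ⟨i0, hi0S, hi0min⟩ := S.exists_min_image a hSne
    -- swap: every element outside S has value ≤ a i0
    have hswap : ∀ j, j ∉ S → a j ≤ a i0 := by
      intro j hj
      by_contra h
      push_neg at h
      have hjne : j ∉ S.erase i0 := fun hm => hj (Finset.mem_of_mem_erase hm)
      have hTcard : (insert j (S.erase i0)).card = Γ := by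
        rw [Finset.card_insert_of_notMem hjne, Finset.card_erase_of_mem hi0S, hcard]
        omega
      have hle := hmax _ hTcard
      rw [Finset.sum_insert hjne, Finset.sum_erase_eq_sub hi0S] at hle
      linarith
    have hcompl : ∑ j ∈ Sᶜ, t j = ∑ j, t j - ∑ j ∈ S, t j := by
      rw [← Finset.sum_add_sum_compl S t]; ring
    calc ∑ j, a j * t j
        = ∑ j ∈ S, a j * t j + ∑ j ∈ Sᶜ, a j * t j :=
          (Finset.sum_add_sum_compl S _).symm
      _ ≤ ∑ j ∈ S, a j * t j + a i0 * ∑ j ∈ Sᶜ, t j := by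
          rw [Finset.mul_sum]
          have := Finset.sum_le_sum (s := Sᶜ)
            (fun j hj => mul_le_mul_of_nonneg_right
              (hswap j (by simpa using hj)) (ht0 j))
          linarith
      _ ≤ ∑ j ∈ S, a j * t j + a i0 * ((Γ : ℝ) - ∑ j ∈ S, t j) := by
          have h1 : ∑ j ∈ Sᶜ, t j ≤ (Γ : ℝ) - ∑ j ∈ S, t j := by rw [hcompl]; linarith
          nlinarith [ha i0]
      _ = ∑ j ∈ S, (a j * t j + a i0 * (1 - t j)) := by
          rw [Finset.sum_add_distrib, ← Finset.mul_sum]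
          congr 2
          rw [Finset.sum_sub_distrib, Finset.sum_const, hcard]
          simp
      _ ≤ ∑ j ∈ S, (a j * t j + a j * (1 - t j)) := by
          apply Finset.sum_le_sum
          intro j hj
          have h1 : a i0 ≤ a j := hi0min j hj
          have h2 : 0 ≤ 1 - t j := by linarith [ht1 j]
          nlinarith
      _ = ∑ j ∈ S, a j := Finset.sum_congr rfl (fun j _ => by ring)

/-- for `c : Fin n → ℝ` and a natural budget `Γ ≤ n`, the supremum of
`∑ j, c j * ξ j` over `ξ` with `|ξ j| ≤ 1` and `∑ j, |ξ j| ≤ Γ` equals the maximum over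
subsets `S` with `|S| = Γ` of `∑_{j ∈ S} |c j|` (the sum of the `Γ` largest `|c j|`);
in particular both are attained. -/
theorem budget_uncertainty_inner_maximization (n : ℕ) (hn : 1 ≤ n)
    (c : Fin n → ℝ) (Γ : ℕ) (hΓ : Γ ≤ n) :
    ∃ M : ℝ,
      IsGreatest
        {s : ℝ | ∃ ξ : Fin n → ℝ,
          (∀ j, |ξ j| ≤ 1) ∧ (∑ j, |ξ j|) ≤ (Γ : ℝ) ∧ s = ∑ j, c j * ξ j} M ∧
      IsGreatest
        {s : ℝ | ∃ S : Finset (Fin n), S.card = Γ ∧ s = ∑ j ∈ S, |c j|} M := by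
  -- pick the maximizing subset of card Γ
  have hne : (Finset.univ.powersetCard Γ : Finset (Finset (Fin n))).Nonempty := by
    apply Finset.powersetCard_nonempty.mpr
    simpa using hΓ
  obtain ⟨S, hSmem, hSmax⟩ :=
    (Finset.univ.powersetCard Γ).exists_max_image (fun T => ∑ j ∈ T, |c j|) hne
  have hScard : S.card = Γ := (Finset.mem_powersetCard.mp hSmem).2
  have hmax : ∀ T : Finset (Fin n), T.card = Γ → ∑ j ∈ T, |c j| ≤ ∑ j ∈ S, |c j| := by
    intro T hT
    exact hSmax T (Finset.mem_powersetCard.mpr ⟨Finset.subset_univ T, hT⟩)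
  refine ⟨∑ j ∈ S, |c j|, ⟨⟨?_, ?_⟩, ⟨⟨S, hScard, rfl⟩, ?_⟩⟩⟩
  · -- membership: ξ = sign(c) on S, 0 off S
    refine ⟨fun j => if j ∈ S then Real.sign (c j) else 0, ?_, ?_, ?_⟩
    · intro j
      by_cases hj : j ∈ S <;> simp [hj, abs_sign_le_one]
    · calc ∑ j, |if j ∈ S then Real.sign (c j) else 0|
          ≤ ∑ j, (if j ∈ S then (1:ℝ) else 0) := by
            apply Finset.sum_le_sum
            intro j _
            by_cases hj : j ∈ S <;> simp [hj, abs_sign_le_one]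
        _ = S.card := by simp
        _ = (Γ : ℝ) := by rw [hScard]
    · symm
      have h0 : ∀ j, c j * (if j ∈ S then Real.sign (c j) else 0)
          = if j ∈ S then |c j| else 0 := fun j => by
        by_cases hj : j ∈ S <;> simp [hj, sign_helper]
      rw [Finset.sum_congr rfl (fun j _ => h0 j), Finset.sum_ite_mem,
        Finset.univ_inter]
  · -- upper bound for the first set
    rintro s ⟨ξ, h1, h2, rfl⟩
    calc ∑ j, c j * ξ j ≤ ∑ j, |c j| * |ξ j| := by
          apply Finset.sum_le_sum
          intro j _
          calc c j * ξ j ≤ |c j * ξ j| := le_abs_self _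
            _ = |c j| * |ξ j| := abs_mul _ _
      _ ≤ ∑ j ∈ S, |c j| :=
          key_ineq n Γ (fun j => |c j|) (fun j => |ξ j|)
            (fun j => abs_nonneg _) (fun j => abs_nonneg _) h1 h2 S hScard hmax
  · rintro s ⟨T, hT, rfl⟩
    exact hmax T hT
end
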